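/- Let X be a reflexive real Banach space and T a compact linear operator from X to X with operator norm 1 such that [T] = inf{‖Tz‖ : z ∈ S_X} > 0. Let x be a unit vector in M_T that is a smooth point of X. Then there exists ε_x ∈ [0,1) such that for every y ∈ X, x ⊥_B y implies Ty ⊥_B^{ε_x} Tx (i.e., T is ε_x-CLAOR at x). -/

import Mathlib

/-- Birkhoff–James orthogonality: `x ⊥_B y` iff `‖x + λ • y‖ ≥ ‖x‖` for every real `λ`. -/
def BJOrth {E : Type*} [NormedAddCommGroup E] [NormedSpace ℝ E] (x y : E) : Prop :=
  ∀ lam : ℝ, ‖x‖ ≤ ‖x + lam • y‖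

/-- `x` is a left-symmetric point: `x ⊥_B y` implies `y ⊥_B x` for all `y`. -/
def LeftSymmetricPt {E : Type*} [NormedAddCommGroup E] [NormedSpace ℝ E] (x : E) : Prop :=
  ∀ y : E, BJOrth x y → BJOrth y x

/-- `x` is a right-symmetric point: `y ⊥_B x` implies `x ⊥_B y` for all `y`. -/
def RightSymmetricPt {E : Type*} [NormedAddCommGroup E] [NormedSpace ℝ E] (x : E) : Prop :=
  ∀ y : E, BJOrth y x → BJOrth x y

/-- A nonzero `x` is a smooth point if there is exactly one norm-one continuous linear
functional `f` with `f x = ‖x‖`. -/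
def SmoothPoint {E : Type*} [NormedAddCommGroup E] [NormedSpace ℝ E] (x : E) : Prop :=
  ∃! f : E →L[ℝ] ℝ, ‖f‖ = 1 ∧ f x = ‖x‖

/-- A normed space is reflexive if the canonical embedding into the double dual is onto. -/
def ReflexiveSpace (E : Type*) [NormedAddCommGroup E] [NormedSpace ℝ E] : Prop :=
  Function.Surjective (NormedSpace.inclusionInDoubleDual ℝ E)

/-- `T` (a compact operator) is a right-symmetric point of the space of compact operators
(with the operator norm): `A ⊥_B T` implies `T ⊥_B A` for every compact operator `A`. -/
def RightSymmetricCompactOp {X Y : Type*} [NormedAddCommGroup X] [NormedSpace ℝ X]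
    [NormedAddCommGroup Y] [NormedSpace ℝ Y] (T : X →L[ℝ] Y) : Prop :=
  ∀ A : X →L[ℝ] Y, IsCompactOperator A → BJOrth A T → BJOrth T A

/-- `T` is left orthogonality preserving at `x`: `x ⊥_B y` implies `T x ⊥_B T y`. -/
def LeftOPAt {X Y : Type*} [NormedAddCommGroup X] [NormedSpace ℝ X]
    [NormedAddCommGroup Y] [NormedSpace ℝ Y] (T : X →L[ℝ] Y) (x : X) : Prop :=
  ∀ y : X, BJOrth x y → BJOrth (T x) (T y)

/-- Approximate Birkhoff–James orthogonality in the sense of Dragomir–Chmieliński: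
`x ⊥_D^ε y` iff `‖x + λ • y‖ ≥ √(1 - ε²) * ‖x‖` for every real `λ`. -/
def ApproxOrthD {E : Type*} [NormedAddCommGroup E] [NormedSpace ℝ E]
    (ε : ℝ) (x y : E) : Prop :=
  ∀ lam : ℝ, Real.sqrt (1 - ε ^ 2) * ‖x‖ ≤ ‖x + lam • y‖

/-- Approximate Birkhoff–James orthogonality in the sense of Chmieliński:
`x ⊥_B^ε y` iff `‖x + λ • y‖² ≥ ‖x‖² - 2ε‖x‖‖λ • y‖` for every real `λ`. -/
def ApproxOrthC {E : Type*} [NormedAddCommGroup E] [NormedSpace ℝ E]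
    (ε : ℝ) (x y : E) : Prop :=
  ∀ lam : ℝ, ‖x‖ ^ 2 - 2 * ε * ‖x‖ * ‖lam • y‖ ≤ ‖x + lam • y‖ ^ 2

/-!
In finite dimensions (forced by compactness of `T` together with `[T] > 0`), the pairs `(z, h)`
with `z` a unit vector satisfying `x ⊥_B z` and `h` a norming functional of `T z` form a compact
set, so `|h (T x)|` attains a maximum `ε` there. If that maximum were `1`, then `h (T x) • h ∘ T`
would be a norming functional of `x`; by smoothness it is the Hahn–Banach functional of `x`
vanishing on `z`, which forces `T z = 0`. Finally, a norming functional `h` of `T y` with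
`|h (T x)| ≤ ε` witnesses `T y ⊥_B^ε T x`.
-/

section Orthogonality

variable {E : Type*} [NormedAddCommGroup E] [NormedSpace ℝ E]

theorem BJOrth.smul_right {x y : E} (h : BJOrth x y) (a : ℝ) : BJOrth x (a • y) := by
  intro lam
  rw [smul_smul]
  exact h (lam * a)

theorem isClosed_setOf_bjOrth (x : E) : IsClosed {y : E | BJOrth x y} := by
  simp only [BJOrth, Set.ofPred_forall]
  exact isClosed_iInter fun lam => isClosed_le continuous_const (by fun_prop)

theorem BJOrth.exists_dual {x y : E} (hxy : BJOrth x y) :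
    ∃ φ : E →L[ℝ] ℝ, ‖φ‖ ≤ 1 ∧ φ x = ‖x‖ ∧ φ y = 0 := by
  set S := Submodule.span ℝ {y}
  have hqx : ‖S.mkQL x‖ = ‖x‖ := by
    refine le_antisymm (Submodule.Quotient.norm_mk_le S x) ?_
    rw [show ‖S.mkQL x‖ = Metric.infDist x S from QuotientAddGroup.norm_mk (S := S.toAddSubgroup) x,
      Metric.le_infDist ⟨0, S.zero_mem⟩]
    intro s hs
    obtain ⟨a, rfl⟩ := Submodule.mem_span_singleton.1 hs
    simpa [dist_eq_norm, sub_eq_add_neg, ← neg_smul] using hxy (-a)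
  obtain ⟨g, hg, hgx⟩ := exists_dual_vector'' ℝ (S.mkQL x)
  refine ⟨g.comp S.mkQL, ?_, by rw [g.comp_apply, hgx]; exact_mod_cast hqx, ?_⟩
  · refine ContinuousLinearMap.opNorm_le_bound _ zero_le_one fun z => ?_
    calc ‖g (S.mkQL z)‖ ≤ ‖g‖ * ‖S.mkQL z‖ := g.le_opNorm _
      _ ≤ 1 * ‖z‖ := by gcongr; exact Submodule.Quotient.norm_mk_le S z
  · simp [(Submodule.Quotient.mk_eq_zero S).2 (Submodule.mem_span_singleton_self y)]

theorem norm_eq_one_of_norm_le_one_of_apply_eq_norm {x : E} (hx : x ≠ 0) {f : E →L[ℝ] ℝ}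
    (hf : ‖f‖ ≤ 1) (hfx : f x = ‖x‖) : ‖f‖ = 1 := by
  refine le_antisymm hf (le_of_mul_le_mul_right ?_ (norm_pos_iff.2 hx))
  simpa [hfx] using f.le_opNorm x

theorem SmoothPoint.apply_eq_zero_of_bjOrth {x y : E} (hsm : SmoothPoint x) (hx : x ≠ 0)
    (hxy : BJOrth x y) {f : E →L[ℝ] ℝ} (hf : ‖f‖ ≤ 1) (hfx : f x = ‖x‖) : f y = 0 := by
  obtain ⟨φ, hφ, hφx, hφy⟩ := hxy.exists_dual
  rw [hsm.unique ⟨norm_eq_one_of_norm_le_one_of_apply_eq_norm hx hf hfx, hfx⟩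
    ⟨norm_eq_one_of_norm_le_one_of_apply_eq_norm hx hφ hφx, hφx⟩, hφy]

theorem approxOrthC_of_dual {ε : ℝ} (hε : 0 ≤ ε) {u v : E} {g : E →L[ℝ] ℝ} (hg : ‖g‖ ≤ 1)
    (hgu : g u = ‖u‖) (hgv : |g v| ≤ ε * ‖v‖) : ApproxOrthC ε u v := by
  intro lam
  have hlin : ‖u‖ - ε * ‖lam • v‖ ≤ ‖u + lam • v‖ := by
    have hv : |lam * g v| ≤ ε * ‖lam • v‖ := by
      rw [abs_mul, norm_smul, Real.norm_eq_abs, mul_left_comm]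
      gcongr
    calc ‖u‖ - ε * ‖lam • v‖ ≤ g (u + lam • v) := by
          rw [map_add, map_smul, hgu, smul_eq_mul]
          linarith [neg_abs_le (lam * g v)]
      _ ≤ ‖g‖ * ‖u + lam • v‖ := (le_abs_self _).trans (g.le_opNorm _)
      _ ≤ ‖u + lam • v‖ := mul_le_of_le_one_left (norm_nonneg _) hg
  have hb : 0 ≤ ε * ‖lam • v‖ := by positivity
  rcases le_total (ε * ‖lam • v‖) ‖u‖ with h | h
  · nlinarith [pow_le_pow_left₀ (sub_nonneg.2 h) hlin 2]
  · nlinarith [norm_nonneg u, sq_nonneg ‖u + lam • v‖]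

end Orthogonality

theorem IsCompact.exists_lt_forall_le {β : Type*} [TopologicalSpace β] {K : Set β}
    (hK : IsCompact K) {f : β → ℝ} (hf : ContinuousOn f K) {a b : ℝ} (hab : a < b)
    (hlt : ∀ p ∈ K, f p < b) : ∃ ε, a ≤ ε ∧ ε < b ∧ ∀ p ∈ K, f p ≤ ε := by
  rcases K.eq_empty_or_nonempty with rfl | hne
  · exact ⟨a, le_rfl, hab, by simp⟩
  · obtain ⟨p, hp, hmax⟩ := hK.exists_isMaxOn hne hf
    exact ⟨max a (f p), le_max_left _ _, max_lt hab (hlt p hp),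
      fun q hq => (hmax hq).trans (le_max_right _ _)⟩

section Operators

variable {X Y : Type*} [NormedAddCommGroup X] [NormedSpace ℝ X]
  [NormedAddCommGroup Y] [NormedSpace ℝ Y]

theorem sInf_norm_apply_sphere_mul_norm_le (T : X →L[ℝ] Y) (z : X) :
    sInf {r : ℝ | ∃ z : X, ‖z‖ = 1 ∧ ‖T z‖ = r} * ‖z‖ ≤ ‖T z‖ := by
  rcases eq_or_ne z 0 with rfl | hz
  · simp
  have hbdd : BddBelow {r : ℝ | ∃ z : X, ‖z‖ = 1 ∧ ‖T z‖ = r} :=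
    ⟨0, by rintro _ ⟨_, -, rfl⟩; positivity⟩
  have hz' : 0 < ‖z‖ := norm_pos_iff.2 hz
  calc _ ≤ ‖T (‖z‖⁻¹ • z)‖ * ‖z‖ := by
        gcongr
        exact csInf_le hbdd ⟨_, norm_smul_inv_norm (𝕜 := ℝ) hz, rfl⟩
    _ = ‖T z‖ := by
        rw [map_smul, norm_smul, norm_inv, norm_norm]
        field_simp

theorem FiniteDimensional.of_isCompactOperator_of_antilipschitz [CompleteSpace X]
    {T : X →L[ℝ] Y} (hT : IsCompactOperator T) {K : NNReal} (hK : AntilipschitzWith K T) :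
    FiniteDimensional ℝ X := by
  obtain ⟨C, hC, hC0⟩ := hT
  have : LocallyCompactSpace X :=
    ((hK.isClosedEmbedding T.uniformContinuous).isCompact_preimage hC
      ).locallyCompactSpace_of_mem_nhds_of_addGroup hC0
  exact .of_locallyCompactSpace ℝ

theorem abs_apply_lt_one_of_smoothPoint {T : X →L[ℝ] Y} (hT : ‖T‖ ≤ 1) {x z : X}
    (hsm : SmoothPoint x) (hx : ‖x‖ = 1) (hxz : BJOrth x z) {h : Y →L[ℝ] ℝ} (hh : ‖h‖ ≤ 1)
    (hhz : h (T z) = ‖T z‖) (hTz : T z ≠ 0) : |h (T x)| < 1 := by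
  have hle : ‖h.comp T‖ ≤ 1 :=
    (h.opNorm_comp_le T).trans (mul_le_one₀ hh (norm_nonneg _) hT)
  have hTx : |h (T x)| ≤ 1 :=
    calc |h (T x)| ≤ ‖h.comp T‖ * ‖x‖ := (h.comp T).le_opNorm x
      _ ≤ 1 := by rw [hx, mul_one]; exact hle
  refine hTx.lt_of_ne fun habs => hTz ?_
  have hf : ‖h (T x) • h.comp T‖ ≤ 1 := by
    rw [norm_smul, Real.norm_eq_abs, habs, one_mul]
    exact hle
  have hfx : (h (T x) • h.comp T) x = ‖x‖ := by
    simp [hx, ← sq, ← sq_abs, habs]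
  have hfz := hsm.apply_eq_zero_of_bjOrth (ne_zero_of_norm_ne_zero (hx.symm ▸ one_ne_zero)) hxz hf hfx
  have hTx0 : h (T x) ≠ 0 := by simp [← abs_ne_zero, habs]
  simpa [hhz, hTx0] using hfz

theorem exists_abs_apply_le_of_smoothPoint [FiniteDimensional ℝ X] [FiniteDimensional ℝ Y]
    {T : X →L[ℝ] Y} (hT : ‖T‖ ≤ 1) (hinj : Function.Injective T) {x : X}
    (hsm : SmoothPoint x) (hx : ‖x‖ = 1) :
    ∃ ε, 0 ≤ ε ∧ ε < 1 ∧ ∀ z ≠ 0, BJOrth x z → ∀ h : Y →L[ℝ] ℝ, ‖h‖ ≤ 1 →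
      h (T z) = ‖T z‖ → |h (T x)| ≤ ε := by
  set S := {p : X × (Y →L[ℝ] ℝ) |
    ‖p.1‖ = 1 ∧ BJOrth x p.1 ∧ ‖p.2‖ ≤ 1 ∧ p.2 (T p.1) = ‖T p.1‖}
  have hSc : IsClosed S :=
    (isClosed_eq continuous_fst.norm continuous_const).inter <|
      ((isClosed_setOf_bjOrth x).preimage continuous_fst).inter <|
        (isClosed_le continuous_snd.norm continuous_const).inter <|
          isClosed_eq (continuous_snd.clm_apply (T.continuous.comp continuous_fst))
            (T.continuous.comp continuous_fst).norm
  have hS : IsCompact S :=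
    ((isCompact_sphere 0 1).prod (isCompact_closedBall 0 1)).of_isClosed_subset hSc
      fun p hp => ⟨by simpa using hp.1, by simpa using hp.2.2.1⟩
  obtain ⟨ε, hε0, hε1, hε⟩ := hS.exists_lt_forall_le (f := fun p => |p.2 (T x)|)
    (by fun_prop) zero_lt_one fun p ⟨hp1, hpx, hp2, hpT⟩ =>
      abs_apply_lt_one_of_smoothPoint hT hsm hx hpx hp2 hpT
        ((map_ne_zero_iff T hinj).2 (ne_zero_of_norm_ne_zero (hp1.symm ▸ one_ne_zero)))
  refine ⟨ε, hε0, hε1, fun z hz hxz h hh hhz => hε (‖z‖⁻¹ • z, h) ⟨?_, hxz.smul_right _, hh, ?_⟩⟩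
  · exact norm_smul_inv_norm (𝕜 := ℝ) hz
  · simp [map_smul, hhz, norm_smul]

end Operators

theorem CLAOR_at_smooth_point_general {X : Type*}
    [NormedAddCommGroup X] [NormedSpace ℝ X] [CompleteSpace X]
    (T : X →L[ℝ] X) (hTc : IsCompactOperator T) (hT : ‖T‖ = 1)
    (hbelow : 0 < sInf {r : ℝ | ∃ z : X, ‖z‖ = 1 ∧ ‖T z‖ = r})
    (x : X) (hx : ‖x‖ = 1) (hMT : ‖T x‖ = ‖T‖) (hsm : SmoothPoint x) :
    ∃ ε : ℝ, 0 ≤ ε ∧ ε < 1 ∧ ∀ y : X, BJOrth x y → ApproxOrthC ε (T y) (T x) := by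
  obtain ⟨K, hK⟩ := antilipschitzWith_iff_exists_mul_le_norm.2
    ⟨_, hbelow, sInf_norm_apply_sphere_mul_norm_le T⟩
  have : FiniteDimensional ℝ X := .of_isCompactOperator_of_antilipschitz hTc hK
  obtain ⟨ε, hε0, hε1, hε⟩ := exists_abs_apply_le_of_smoothPoint hT.le hK.injective hsm hx
  refine ⟨ε, hε0, hε1, fun y hxy => ?_⟩
  rcases eq_or_ne y 0 with rfl | hy
  · intro lam
    simp
  obtain ⟨h, hh, hhy⟩ := exists_dual_vector'' ℝ (T y)
  refine approxOrthC_of_dual hε0 hh hhy ?_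
  rw [hMT, hT, mul_one]
  exact hε y hy hxy h hh hhy

/-- Let `X` be a reflexive Banach space and `T : X → X` a norm-one compact
operator with `[T] = inf {‖T z‖ : ‖z‖ = 1} > 0`. If `x` is a unit vector in `M_T` that is a
smooth point, then there is `ε ∈ [0,1)` such that `x ⊥_B y` implies `T y ⊥_B^ε T x` for all
`y` (i.e., `T` is `ε`-CLAOR at `x`). -/
theorem CLAOR_at_smooth_point {X : Type*}
    [NormedAddCommGroup X] [NormedSpace ℝ X] [CompleteSpace X]
    (hX : ReflexiveSpace X)
    (T : X →L[ℝ] X) (hTc : IsCompactOperator T) (hT : ‖T‖ = 1)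
    (hbelow : 0 < sInf {r : ℝ | ∃ z : X, ‖z‖ = 1 ∧ ‖T z‖ = r})
    (x : X) (hx : ‖x‖ = 1) (hMT : ‖T x‖ = ‖T‖) (hsm : SmoothPoint x) :
    ∃ ε : ℝ, 0 ≤ ε ∧ ε < 1 ∧ ∀ y : X, BJOrth x y → ApproxOrthC ε (T y) (T x) :=
  CLAOR_at_smooth_point_general T hTc hT hbelow x hx hMT hsm
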